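/- A fuzzy soft topological space (X,τ) is fuzzy soft q-T₂ if and only if every fuzzy soft point e_x^α equals the infimum of the closures of all fuzzy soft neighborhoods of e_x^α. -/

import Mathlib

open unitInterval

instance : Fact ((0:ℝ) ≤ 1) := ⟨zero_le_one⟩

/-- A fuzzy soft set over `(X, E)` is a map `E → X → [0,1]`. -/
abbrev FSS (X E : Type*) := E → X → I

/-- Quasi-coincidence of two fuzzy soft sets. -/
def FSS.QCoin {X E : Type*} (f g : FSS X E) : Prop :=
  ∃ e x, 1 < (f e x : ℝ) + (g e x : ℝ)

/-- Complement of a fuzzy soft set. -/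
noncomputable def FSS.compl {X E : Type*} (f : FSS X E) : FSS X E :=
  fun e x => symm (f e x)

open scoped Classical in
/-- The fuzzy soft point `e_x^α`. -/
noncomputable def fsPoint {X E : Type*} (e : E) (x : X) (α : I) : FSS X E :=
  fun e' x' => if e' = e ∧ x' = x then α else 0

/-- Preimage of a fuzzy soft set under the fuzzy soft mapping `(u, p)`. -/
def fsPreimage {X E Y K : Type*} (u : X → Y) (p : E → K) (g : FSS Y K) : FSS X E :=
  fun e x => g (p e) (u x)

/-- Image of a fuzzy soft set under the fuzzy soft mapping `(u, p)`. -/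
noncomputable def fsImage {X E Y K : Type*} (u : X → Y) (p : E → K) (f : FSS X E) : FSS Y K :=
  fun k y => ⨆ x ∈ u ⁻¹' {y}, ⨆ e ∈ p ⁻¹' {k}, f e x

/-- A fuzzy soft topology on `(X, E)`. -/
structure FSTopology (X E : Type*) where
  opens : Set (FSS X E)
  univ_mem : (fun _ _ => 1) ∈ opens
  null_mem : (fun _ _ => 0) ∈ opens
  inter_mem : ∀ f g, f ∈ opens → g ∈ opens → (fun e x => f e x ⊓ g e x) ∈ opens
  sSup_mem : ∀ S ⊆ opens, (fun e x => ⨆ f ∈ S, f e x) ∈ opens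

/-- A fuzzy soft set is closed iff its complement is open. -/
def FSTopology.IsClosed {X E : Type*} (τ : FSTopology X E) (f : FSS X E) : Prop :=
  f.compl ∈ τ.opens

/-- Closure: the pointwise infimum of all closed supersets. -/
noncomputable def FSTopology.closure {X E : Type*} (τ : FSTopology X E) (f : FSS X E) :
    FSS X E :=
  fun e x => ⨅ g ∈ {g : FSS X E | τ.IsClosed g ∧ f ≤ g}, g e x

/-- Fuzzy soft `q`-`T₂`. -/
def FSTopology.QT2 {X E : Type*} (τ : FSTopology X E) : Prop :=
  ∀ (e₁ e₂ : E) (x y : X) (α β : I), 0 < α → 0 < β →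
    ((e₁ ≠ e₂ ∨ x ≠ y) →
      ∃ f ∈ τ.opens, ∃ g ∈ τ.opens, α ≤ f e₁ x ∧ β ≤ g e₂ y ∧ ¬ f.QCoin g) ∧
    ((e₁ = e₂ ∧ x = y ∧ α < β) →
      ∃ f ∈ τ.opens, ∃ g ∈ τ.opens, α ≤ f e₁ x ∧ 1 < (β : ℝ) + g e₂ y ∧ ¬ f.QCoin g)

/-
For distinct points `p`, `q`, the hypothesis at level `1` gives, for every `ε > 0`, an open `h`
with `h(p) = 1` whose closure is below `ε` at `q`, and symmetrically. Finite infima turn these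
into antitone sequences `V n`, `U n`; then `⨆ₙ (V n ⊓ (cl (U n))ᶜ)` and `⨆ₙ (U n ⊓ (cl (V n))ᶜ)`
are open, equal `1` at `p` and at `q` respectively, and are not quasi-coincident because the
sequences are nested. For a single point, if the infimum of closures at `e_x` is `α < β`, some
open neighbourhood `h` has closure below `β` there, and `(cl h)ᶜ` is the required open
Q-neighbourhood. Conversely, non-quasi-coincident open `f`, `g` give `cl f ≤ gᶜ`, which pins the
infimum of closures down to the point.
-/

namespace unitInterval

lemma symm_biInf {ι : Type*} (s : Set ι) (a : ι → I) : σ (⨅ i ∈ s, a i) = ⨆ i ∈ s, σ (a i) :=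
  le_antisymm
    (symm_le_comm.2 (le_iInf₂ fun i hi => symm_le_comm.1 (le_iSup₂ (f := fun i _ => σ (a i)) i hi)))
    (iSup₂_le fun i hi => symm_le_symm.2 (iInf₂_le i hi))

end unitInterval

namespace FSS

variable {X E : Type*}

lemma compl_apply (f : FSS X E) (e : E) (x : X) : f.compl e x = σ (f e x) := rfl

@[simp]
lemma compl_compl (f : FSS X E) : f.compl.compl = f :=
  funext₂ fun e x => symm_symm (f e x)

lemma compl_le_compl {f g : FSS X E} (h : f ≤ g) : g.compl ≤ f.compl :=
  fun e x => symm_le_symm.2 (h e x)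

lemma le_compl_comm {f g : FSS X E} : f ≤ g.compl ↔ g ≤ f.compl :=
  ⟨fun h e x => le_symm_comm.1 (h e x), fun h e x => le_symm_comm.1 (h e x)⟩

lemma not_qCoin_iff {f g : FSS X E} : ¬ f.QCoin g ↔ f ≤ g.compl := by
  simp only [QCoin, not_exists, not_lt, Pi.le_def, compl_apply, ← Subtype.coe_le_coe,
    coe_symm_eq, le_sub_iff_add_le]

end FSS

lemma fsPoint_apply_self {X E : Type*} (e : E) (x : X) (α : I) : fsPoint e x α e x = α :=
  if_pos ⟨rfl, rfl⟩

lemma fsPoint_apply_of_ne {X E : Type*} {e e' : E} {x x' : X} (α : I)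
    (h : ¬(e' = e ∧ x' = x)) : fsPoint e x α e' x' = 0 :=
  if_neg h

namespace FSTopology

variable {X E : Type*} (τ : FSTopology X E)

lemma inf_mem {f g : FSS X E} (hf : f ∈ τ.opens) (hg : g ∈ τ.opens) : f ⊓ g ∈ τ.opens :=
  τ.inter_mem f g hf hg

lemma biSup_mem {ι : Type*} (s : Set ι) (u : ι → FSS X E) (hu : ∀ i ∈ s, u i ∈ τ.opens) :
    (fun e x => ⨆ i ∈ s, u i e x) ∈ τ.opens := by
  simpa only [iSup_image] using τ.sSup_mem (u '' s) (by rintro _ ⟨i, hi, rfl⟩; exact hu i hi)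

lemma iSup_mem {ι : Type*} (u : ι → FSS X E) (hu : ∀ i, u i ∈ τ.opens) : ⨆ i, u i ∈ τ.opens := by
  simpa only [Set.mem_univ, iSup_pos, ← iSup_apply] using τ.biSup_mem Set.univ u fun i _ => hu i

lemma finsetInf_mem {ι : Type*} (s : Finset ι) (u : ι → FSS X E) (hu : ∀ i ∈ s, u i ∈ τ.opens) :
    s.inf u ∈ τ.opens :=
  Finset.inf_induction τ.univ_mem (fun _ hf _ hg => τ.inf_mem hf hg) hu

lemma isClosed_compl {g : FSS X E} (hg : g ∈ τ.opens) : τ.IsClosed g.compl := by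
  simpa [IsClosed] using hg

lemma le_closure (f : FSS X E) : f ≤ τ.closure f :=
  fun _ _ => le_iInf₂ fun _ hg => hg.2 _ _

lemma closure_le {f k : FSS X E} (hk : τ.IsClosed k) (hfk : f ≤ k) : τ.closure f ≤ k :=
  fun _ _ => iInf₂_le k ⟨hk, hfk⟩

lemma closure_mono {f g : FSS X E} (h : f ≤ g) : τ.closure f ≤ τ.closure g :=
  fun _ _ => le_iInf₂ fun k hk => iInf₂_le k ⟨hk.1, h.trans hk.2⟩

lemma isClosed_closure (f : FSS X E) : τ.IsClosed (τ.closure f) := by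
  have hcompl : (τ.closure f).compl = fun e x => ⨆ g ∈ {g | τ.IsClosed g ∧ f ≤ g}, g.compl e x :=
    funext₂ fun e x => symm_biInf _ _
  rw [IsClosed, hcompl]
  exact τ.biSup_mem _ FSS.compl fun g hg => hg.1

lemma closure_le_compl_of_not_qCoin {f g : FSS X E} (hg : g ∈ τ.opens) (hfg : ¬ f.QCoin g) :
    τ.closure f ≤ g.compl :=
  τ.closure_le (τ.isClosed_compl hg) (FSS.not_qCoin_iff.1 hfg)

noncomputable def sepOpen (V U : ℕ → FSS X E) : FSS X E :=
  ⨆ n, V n ⊓ (τ.closure (U n)).compl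

lemma sepOpen_mem {V : ℕ → FSS X E} (hV : ∀ n, V n ∈ τ.opens) (U : ℕ → FSS X E) :
    τ.sepOpen V U ∈ τ.opens :=
  τ.iSup_mem _ fun n => τ.inf_mem (hV n) (τ.isClosed_closure (U n))

lemma inf_compl_closure_le_compl_inf {a b c d : FSS X E} (hcb : c ≤ b) :
    a ⊓ (τ.closure b).compl ≤ (c ⊓ d).compl :=
  inf_le_right.trans (FSS.compl_le_compl (inf_le_left.trans (hcb.trans (τ.le_closure b))))

-- The `n`-th piece of one set meets the `m`-th piece of the other only inside a closure it
-- is cut away from: `U m ≤ U n` when `n ≤ m`, and `V n ≤ V m` when `m ≤ n`.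
lemma sepOpen_le_compl {V U : ℕ → FSS X E} (hV : Antitone V) (hU : Antitone U) :
    τ.sepOpen V U ≤ (τ.sepOpen U V).compl := by
  refine iSup_le fun n => FSS.le_compl_comm.1 (iSup_le fun m => ?_)
  rcases le_total m n with hmn | hnm
  · exact τ.inf_compl_closure_le_compl_inf (hV hmn)
  · exact FSS.le_compl_comm.1 (τ.inf_compl_closure_le_compl_inf (hU hnm))

lemma sepOpen_apply_eq_one {V U : ℕ → FSS X E} {e : E} {x : X} (hV : ∀ n, 1 ≤ V n e x)
    (hU : ∀ ε : I, 0 < ε → ∃ n, τ.closure (U n) e x < ε) : τ.sepOpen V U e x = 1 := by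
  refine le_antisymm le_one' (le_of_forall_lt fun w hw => ?_)
  obtain ⟨n, hn⟩ := hU (σ w) (lt_symm_comm.1 (symm_zero ▸ hw))
  calc w < σ (τ.closure (U n) e x) := lt_symm_comm.1 hn
    _ ≤ (V n ⊓ (τ.closure (U n)).compl) e x := le_inf (le_one'.trans (hV n)) le_rfl
    _ ≤ τ.sepOpen V U e x := by
      rw [sepOpen, iSup_apply, iSup_apply]
      exact le_iSup (fun i => (V i ⊓ (τ.closure (U i)).compl) e x) n

lemma exists_antitone_open_closure_lt {e₁ e₂ : E} {x y : X}
    (hsmall : ∀ ε : I, 0 < ε → ∃ h ∈ τ.opens, 1 ≤ h e₁ x ∧ τ.closure h e₂ y < ε) :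
    ∃ V : ℕ → FSS X E, Antitone V ∧ (∀ n, V n ∈ τ.opens) ∧ (∀ n, 1 ≤ V n e₁ x) ∧
      ∀ ε : I, 0 < ε → ∃ n, τ.closure (V n) e₂ y < ε := by
  obtain ⟨ε, -, hε, hε_lim⟩ := exists_seq_strictAnti_tendsto' (zero_lt_one : (0 : I) < 1)
  choose h hh h_one h_cl using fun n => hsmall (ε n) (hε n).1
  refine ⟨fun n => (Finset.Iic n).inf h,
    fun m n hmn => Finset.inf_mono (Finset.Iic_subset_Iic.2 hmn),
    fun n => τ.finsetInf_mem _ _ fun i _ => hh i, fun n => ?_, fun δ hδ => ?_⟩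
  · show 1 ≤ (Finset.Iic n).inf h e₁ x
    rw [Finset.inf_apply, Finset.inf_apply]
    exact Finset.le_inf fun i _ => h_one i
  · obtain ⟨n, hn⟩ := ((tendsto_order.1 hε_lim).2 δ hδ).exists
    exact ⟨n, (τ.closure_mono (Finset.inf_le (Finset.mem_Iic.2 le_rfl)) e₂ y).trans_lt
      ((h_cl n).trans hn)⟩

lemma exists_open_not_qCoin_of_forall_closure_lt {e₁ e₂ : E} {x y : X}
    (h₁ : ∀ ε : I, 0 < ε → ∃ h ∈ τ.opens, 1 ≤ h e₁ x ∧ τ.closure h e₂ y < ε)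
    (h₂ : ∀ ε : I, 0 < ε → ∃ h ∈ τ.opens, 1 ≤ h e₂ y ∧ τ.closure h e₁ x < ε) :
    ∃ f ∈ τ.opens, ∃ g ∈ τ.opens, f e₁ x = 1 ∧ g e₂ y = 1 ∧ ¬ f.QCoin g := by
  obtain ⟨V, hV, hV_open, hV_one, hV_cl⟩ := τ.exists_antitone_open_closure_lt h₁
  obtain ⟨U, hU, hU_open, hU_one, hU_cl⟩ := τ.exists_antitone_open_closure_lt h₂
  exact ⟨τ.sepOpen V U, τ.sepOpen_mem hV_open U, τ.sepOpen U V, τ.sepOpen_mem hU_open V,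
    τ.sepOpen_apply_eq_one hV_one hU_cl, τ.sepOpen_apply_eq_one hU_one hV_cl,
    FSS.not_qCoin_iff.2 (τ.sepOpen_le_compl hV hU)⟩

def nhds (e : E) (x : X) (α : I) : Set (FSS X E) :=
  {f | ∃ h ∈ τ.opens, α ≤ h e x ∧ h ≤ f}

noncomputable def iInfClosureNhds (e : E) (x : X) (α : I) : FSS X E :=
  fun e' x' => ⨅ f ∈ τ.nhds e x α, τ.closure f e' x'

variable {τ}

lemma le_iInfClosureNhds_self (e : E) (x : X) (α : I) : α ≤ τ.iInfClosureNhds e x α e x :=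
  le_iInf₂ fun _ ⟨_, _, hα, hf⟩ => hα.trans ((hf e x).trans (τ.le_closure _ e x))

lemma iInfClosureNhds_le_closure {e : E} {x : X} {α : I} {f : FSS X E} (hf : f ∈ τ.opens)
    (hα : α ≤ f e x) : τ.iInfClosureNhds e x α ≤ τ.closure f :=
  fun _ _ => iInf₂_le f ⟨f, hf, hα, le_rfl⟩

lemma exists_open_closure_lt {e e' : E} {x x' : X} {α β : I}
    (hβ : τ.iInfClosureNhds e x α e' x' < β) :
    ∃ h ∈ τ.opens, α ≤ h e x ∧ τ.closure h e' x' < β := by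
  obtain ⟨f, hfβ⟩ := iInf_lt_iff.1 hβ
  obtain ⟨⟨h, hh, hα, hf⟩, hfβ⟩ := iInf_lt_iff.1 hfβ
  exact ⟨h, hh, hα, (τ.closure_mono hf e' x').trans_lt hfβ⟩

lemma iInfClosureNhds_le_compl {e : E} {x : X} {α : I} {f g : FSS X E} (hf : f ∈ τ.opens)
    (hα : α ≤ f e x) (hg : g ∈ τ.opens) (hfg : ¬ f.QCoin g) :
    τ.iInfClosureNhds e x α ≤ g.compl :=
  (iInfClosureNhds_le_closure hf hα).trans (τ.closure_le_compl_of_not_qCoin hg hfg)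

lemma QT2.iInfClosureNhds_apply_self (hτ : τ.QT2) {e : E} {x : X} {α : I} (hα : 0 < α) :
    τ.iInfClosureNhds e x α e x = α := by
  refine le_antisymm (not_lt.1 fun hlt => ?_) (le_iInfClosureNhds_self e x α)
  obtain ⟨f, hf, g, hg, hαf, hβg, hfg⟩ := (hτ e e x x α _ hα (hα.trans hlt)).2 ⟨rfl, rfl, hlt⟩
  have := iInfClosureNhds_le_compl hf hαf hg hfg e x
  rw [← Subtype.coe_le_coe, FSS.compl_apply, coe_symm_eq] at this
  linarith

lemma QT2.iInfClosureNhds_apply_of_ne (hτ : τ.QT2) {e e' : E} {x x' : X} {α : I} (hα : 0 < α)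
    (hne : ¬(e' = e ∧ x' = x)) : τ.iInfClosureNhds e x α e' x' = 0 := by
  obtain ⟨f, hf, g, hg, hαf, hg_one, hfg⟩ := (hτ e e' x x' α 1 hα zero_lt_one).1 (by tauto)
  have := iInfClosureNhds_le_compl hf hαf hg hfg e' x'
  rwa [FSS.compl_apply, le_one'.antisymm hg_one, symm_one, nonpos_iff_eq_zero] at this

lemma QT2.fsPoint_eq_iInfClosureNhds (hτ : τ.QT2) {e : E} {x : X} {α : I} (hα : 0 < α) :
    fsPoint e x α = τ.iInfClosureNhds e x α := by
  funext e' x'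
  by_cases h : e' = e ∧ x' = x
  · obtain ⟨rfl, rfl⟩ := h
    rw [fsPoint_apply_self, hτ.iInfClosureNhds_apply_self hα]
  · rw [fsPoint_apply_of_ne α h, hτ.iInfClosureNhds_apply_of_ne hα h]

lemma qT2_of_fsPoint_eq_iInfClosureNhds
    (H : ∀ (e : E) (x : X) (α : I), 0 < α → fsPoint e x α = τ.iInfClosureNhds e x α) :
    τ.QT2 := by
  have hsmall (e e' : E) (x x' : X) (hne : ¬(e' = e ∧ x' = x)) (ε : I) (hε : 0 < ε) :
      ∃ h ∈ τ.opens, 1 ≤ h e x ∧ τ.closure h e' x' < ε :=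
    exists_open_closure_lt (by rwa [← H e x 1 zero_lt_one, fsPoint_apply_of_ne 1 hne])
  intro e₁ e₂ x y α β hα _
  refine ⟨fun hne => ?_, ?_⟩
  · obtain ⟨f, hf, g, hg, hf_one, hg_one, hfg⟩ :=
      τ.exists_open_not_qCoin_of_forall_closure_lt (hsmall e₁ e₂ x y (by tauto))
        (hsmall e₂ e₁ y x (by tauto))
    exact ⟨f, hf, g, hg, hf_one ▸ le_one', hg_one ▸ le_one', hfg⟩
  · rintro ⟨rfl, rfl, hαβ⟩
    obtain ⟨h, hh, hαh, hβh⟩ :=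
      exists_open_closure_lt (β := β) (by rwa [← H e₁ x α hα, fsPoint_apply_self])
    refine ⟨h, hh, (τ.closure h).compl, τ.isClosed_closure h, hαh, ?_,
      FSS.not_qCoin_iff.2 (by simpa using τ.le_closure h)⟩
    rw [FSS.compl_apply, coe_symm_eq]
    linarith [Subtype.coe_lt_coe.2 hβh]

end FSTopology

theorem qT2_iff_point_eq_inf_closures_of_nbds {X E : Type*} (τ : FSTopology X E) :
    τ.QT2 ↔ ∀ (e : E) (x : X) (α : I), 0 < α →
      fsPoint e x α = fun e' x' =>
        ⨅ f ∈ {f : FSS X E | ∃ h ∈ τ.opens, α ≤ h e x ∧ h ≤ f},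
          τ.closure f e' x' :=
  ⟨fun hτ _ _ _ hα => hτ.fsPoint_eq_iInfClosureNhds hα, τ.qT2_of_fsPoint_eq_iInfClosureNhds⟩
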